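/- arXiv:2202.00269 — 3 statements merged into one kernel-verified Lean document; each statement's English description precedes it below -/
import Mathlib

section
/- The number of triangulations of a convex (n+2)-gon by non-crossing diagonals equals the Catalan number C_n = (1/(n+1))·binom(2n, n). -/
/-! A combinatorial model of dissections of a convex `N`-gon.
Vertices are `Fin N` in cyclic (convex position) order.  A dissection is
recorded by its set of pairwise non-crossing diagonals; its cells are the
faces of the resulting subdivision. -/

namespace PolygonDissection

/-- The cyclic successor of a vertex of the `N`-gon. -/
def cyc {N : ℕ} (i : Fin N) : Fin N := ⟨(i.val + 1) % N, Nat.mod_lt _ i.pos⟩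

/-- `e` is a side of the convex `N`-gon: a pair of cyclically adjacent vertices. -/
def IsSide (N : ℕ) (e : Finset (Fin N)) : Prop :=
  ∃ i : Fin N, i ≠ cyc i ∧ e = {i, cyc i}

/-- `e` is a diagonal of the convex `N`-gon. -/
def IsDiag (N : ℕ) (e : Finset (Fin N)) : Prop :=
  e.card = 2 ∧ ¬ IsSide N e

/-- Two chords of the convex `N`-gon cross in the interior. -/
def Crosses (N : ℕ) (e f : Finset (Fin N)) : Prop :=
  ∃ a b c d : Fin N, a < c ∧ c < b ∧ b < d ∧
    ((e = {a, b} ∧ f = {c, d}) ∨ (e = {c, d} ∧ f = {a, b}))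

/-- A dissection of the convex `N`-gon: a set of pairwise non-crossing diagonals. -/
def IsDissection (N : ℕ) (S : Finset (Finset (Fin N))) : Prop :=
  (∀ e ∈ S, IsDiag N e) ∧ ∀ e ∈ S, ∀ f ∈ S, ¬ Crosses N e f

/-- `y` is the cyclic successor of `x` among the vertices of `c`. -/
def IsNext {N : ℕ} (c : Finset (Fin N)) (x y : Fin N) : Prop :=
  x ∈ c ∧ y ∈ c ∧ y ≠ x ∧ ∀ z ∈ c, z ≠ x → (y - x).val ≤ (z - x).val

/-- `c` (a set of polygon vertices) is a cell of the dissection `S`: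
each pair of cyclically consecutive vertices of `c` is joined by a side of the
polygon or a diagonal of `S`, and no diagonal of `S` is an interior chord of `c`. -/
def IsCell (N : ℕ) (S : Finset (Finset (Fin N))) (c : Finset (Fin N)) : Prop :=
  3 ≤ c.card ∧
  (∀ x y : Fin N, IsNext c x y → IsSide N {x, y} ∨ {x, y} ∈ S) ∧
  (∀ e ∈ S, e ⊆ c → ∃ x y, e = ({x, y} : Finset (Fin N)) ∧ (IsNext c x y ∨ IsNext c y x))

/-- The number of cells of the dissection `S`. -/
noncomputable def numCells (N : ℕ) (S : Finset (Finset (Fin N))) : ℕ :=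
  {c : Finset (Fin N) | IsCell N S c}.ncard

/-- The quiddity of the dissection `S`: its `i`-th entry is the number of
cells containing the `i`-th vertex. -/
noncomputable def quiddity (N : ℕ) (S : Finset (Finset (Fin N))) (i : Fin N) : ℕ :=
  {c : Finset (Fin N) | IsCell N S c ∧ i ∈ c}.ncard

/-! A dissection all of whose cells are triangles is the same as a maximal set of pairwise
non-crossing diagonals. Indeed, in a cell with four or more vertices the chord joining two
non-consecutive vertices crosses no diagonal, so a maximal dissection would contain it as an
interior chord of one of its cells. Conversely, if a diagonal
`{a, b}` crossing nothing is missing from `S`, the vertices not cut off from `a` and `b` by a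
diagonal of `S` form a cell with a vertex strictly on each side of `{a, b}`, hence with at least
four vertices.

In a triangulation of the `(n + 3)`-gon the side `{0, n + 2}` lies in a unique triangle
`{0, k, n + 2}`. Every diagonal lies on one side of the chords `{0, k}` and `{k, n + 2}`, so the
triangulation splits into triangulations of the polygons `0, …, k` and `k, …, n + 2`, and any two
such glue back together. This gives the Catalan recurrence `C (n + 1) = ∑_{i + j = n} C i * C j`.
-/

open Finset

lemma pair_eq_pair_iff {α : Type*} [DecidableEq α] {a b c d : α} :
    ({a, b} : Finset α) = {c, d} ↔ a = c ∧ b = d ∨ a = d ∧ b = c := by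
  rw [← coe_inj, coe_pair, coe_pair, Set.pair_eq_pair_iff]

lemma exists_pair_lt {α : Type*} [LinearOrder α] {e : Finset α} (he : e.card = 2) :
    ∃ p q, p < q ∧ e = {p, q} := by
  obtain ⟨p, q, hpq, rfl⟩ := card_eq_two.1 he
  rcases hpq.lt_or_gt with h | h
  · exact ⟨p, q, h, rfl⟩
  · exact ⟨q, p, h, pair_comm p q⟩

lemma card_le_one_of_le_of_ge {α : Type*} [PartialOrder α] {e : Finset α} {k : α}
    (h₁ : ∀ v ∈ e, v ≤ k) (h₂ : ∀ v ∈ e, k ≤ v) : e.card ≤ 1 :=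
  card_le_one.2 fun x hx y hy =>
    (le_antisymm (h₁ x hx) (h₂ x hx)).trans (le_antisymm (h₁ y hy) (h₂ y hy)).symm

variable {N : ℕ}

lemma cyc_val (i : Fin N) : (cyc i).val = if i.val + 1 = N then 0 else i.val + 1 := by
  have := i.isLt
  rw [cyc]
  split_ifs with h
  · simp [h]
  · exact Nat.mod_eq_of_lt (by omega)

lemma isSide_pair_iff_of_lt {p q : Fin N} (h : p < q) :
    IsSide N {p, q} ↔ q.val = p.val + 1 ∨ p.val = 0 ∧ q.val + 1 = N := by
  constructor
  · rintro ⟨i, -, he⟩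
    have := cyc_val i
    rcases pair_eq_pair_iff.1 he with ⟨rfl, rfl⟩ | ⟨rfl, rfl⟩ <;> split_ifs at this; all_goals omega
  · rintro (h' | ⟨hp, hq⟩)
    · have hc : cyc p = q := Fin.ext (by rw [cyc_val, if_neg (by omega)]; omega)
      exact ⟨p, hc ▸ h.ne, by rw [hc]⟩
    · have hc : cyc q = p := Fin.ext (by rw [cyc_val, if_pos hq]; omega)
      exact ⟨q, hc ▸ h.ne', by rw [hc, pair_comm]⟩

lemma crosses_symm {e f : Finset (Fin N)} (h : Crosses N e f) : Crosses N f e := by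
  obtain ⟨a, b, c, d, h1, h2, h3, h⟩ := h
  exact ⟨a, b, c, d, h1, h2, h3, by tauto⟩

lemma crosses_pair_iff_of_lt {p q r s : Fin N} (hpq : p < q) (hrs : r < s) :
    Crosses N {p, q} {r, s} ↔ p < r ∧ r < q ∧ q < s ∨ r < p ∧ p < s ∧ s < q := by
  constructor
  · rintro ⟨a, b, c, d, h1, h2, h3, ⟨he, hf⟩ | ⟨he, hf⟩⟩ <;>
    rcases pair_eq_pair_iff.1 he with ⟨rfl, rfl⟩ | ⟨rfl, rfl⟩ <;>
    rcases pair_eq_pair_iff.1 hf with ⟨rfl, rfl⟩ | ⟨rfl, rfl⟩ <;> omega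
  · rintro (⟨h1, h2, h3⟩ | ⟨h1, h2, h3⟩)
    · exact ⟨p, q, r, s, h1, h2, h3, Or.inl ⟨rfl, rfl⟩⟩
    · exact ⟨r, s, p, q, h1, h2, h3, Or.inr ⟨rfl, rfl⟩⟩

lemma IsSide.not_crosses {e : Finset (Fin N)} (he : IsSide N e) (f : Finset (Fin N)) :
    ¬ Crosses N e f := by
  rintro ⟨a, b, c, d, h1, h2, h3, ⟨rfl, rfl⟩ | ⟨rfl, rfl⟩⟩
  · rw [isSide_pair_iff_of_lt (h1.trans h2)] at he
    omega
  · rw [isSide_pair_iff_of_lt (h2.trans h3)] at he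
    omega

lemma not_crosses_of_isSide_or_mem {S : Finset (Finset (Fin N))} {g e : Finset (Fin N)}
    (hg : ∀ f ∈ S, ¬ Crosses N g f) (he : IsSide N e ∨ e ∈ S) : ¬ Crosses N g e := by
  rcases he with he | he
  · exact fun h => he.not_crosses g (crosses_symm h)
  · exact hg e he

lemma not_crosses_of_le_of_ge {e f : Finset (Fin N)} {k : Fin N}
    (he : ∀ v ∈ e, v ≤ k) (hf : ∀ v ∈ f, k ≤ v) : ¬ Crosses N e f := by
  rintro ⟨a, b, c, d, h1, h2, h3, ⟨rfl, rfl⟩ | ⟨rfl, rfl⟩⟩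
  · have := he b (by simp); have := hf c (by simp); omega
  · have := he c (by simp); have := hf a (by simp); omega

def cdist (x y : Fin N) : ℕ := (y - x).val

lemma cdist_eq (x y : Fin N) : cdist x y = if x ≤ y then y.val - x.val else N + y.val - x.val := by
  have hx := x.isLt
  rw [cdist, Fin.val_sub]
  split_ifs with h
  · rw [show N - x.val + y.val = N + (y.val - x.val) by omega, Nat.add_mod_left,
      Nat.mod_eq_of_lt (by omega)]
  · exact (Nat.mod_eq_of_lt (by omega)).trans (by omega)

lemma cdist_lt (x y : Fin N) : cdist x y < N := (y - x).isLt

lemma cdist_self (x : Fin N) : cdist x x = 0 := by simp [cdist_eq]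

lemma cdist_pos {x y : Fin N} (h : y ≠ x) : 0 < cdist x y := by
  rw [cdist_eq]; split_ifs <;> omega

lemma eq_of_cdist_eq {x y z : Fin N} (h : cdist x y = cdist x z) : y = z := by
  rw [cdist_eq, cdist_eq] at h
  split_ifs at h <;> omega

lemma cdist_add_cdist (x y z : Fin N) :
    cdist x y + cdist y z = cdist x z ∨ cdist x y + cdist y z = cdist x z + N := by
  simp only [cdist_eq]
  split_ifs <;> omega

lemma cdist_add_cdist_rev {x y : Fin N} (h : y ≠ x) : cdist x y + cdist y x = N := by
  simp only [cdist_eq]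
  split_ifs <;> omega

lemma isSide_pair_iff_cdist {u v : Fin N} (huv : u ≠ v) :
    IsSide N {u, v} ↔ cdist u v = 1 ∨ cdist v u = 1 := by
  rcases huv.lt_or_gt with h | h
  · rw [isSide_pair_iff_of_lt h]
    simp only [cdist_eq]
    split_ifs <;> omega
  · rw [pair_comm, isSide_pair_iff_of_lt h]
    simp only [cdist_eq]
    split_ifs <;> omega

lemma Crosses.card_left {e f : Finset (Fin N)} (h : Crosses N e f) : e.card = 2 := by
  obtain ⟨a, b, c, d, h1, h2, h3, ⟨rfl, -⟩ | ⟨rfl, -⟩⟩ := h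
  · exact card_pair (h1.trans h2).ne
  · exact card_pair (h2.trans h3).ne

lemma crosses_iff_cdist {x z p q : Fin N} :
    Crosses N {x, z} {p, q} ↔
      0 < cdist x p ∧ cdist x p < cdist x z ∧ cdist x z < cdist x q ∨
      0 < cdist x q ∧ cdist x q < cdist x z ∧ cdist x z < cdist x p := by
  by_cases hxz : x = z
  · subst hxz
    exact iff_of_false (fun h => by simpa using h.card_left) (by rw [cdist_self]; omega)
  by_cases hpq : p = q
  · subst hpq
    exact iff_of_false (fun h => by simpa using (crosses_symm h).card_left) (by omega)
  obtain ⟨a, b, hab, he⟩ := exists_pair_lt (card_pair hxz)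
  obtain ⟨c, d, hcd, hf⟩ := exists_pair_lt (card_pair hpq)
  rw [he, hf, crosses_pair_iff_of_lt hab hcd]
  rcases pair_eq_pair_iff.1 he with ⟨rfl, rfl⟩ | ⟨rfl, rfl⟩ <;>
    rcases pair_eq_pair_iff.1 hf with ⟨rfl, rfl⟩ | ⟨rfl, rfl⟩ <;>
    simp only [cdist_eq] <;> split_ifs <;> omega

def IsMaxDissection (N : ℕ) (S : Finset (Finset (Fin N))) : Prop :=
  IsDissection N S ∧ ∀ e, IsDiag N e → (∀ f ∈ S, ¬ Crosses N e f) → e ∈ S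

lemma IsNext.cdist_le {c : Finset (Fin N)} {x y z : Fin N} (h : IsNext c x y) (hz : z ∈ c)
    (hzx : z ≠ x) : cdist x y ≤ cdist x z :=
  h.2.2.2 z hz hzx

lemma IsNext.cdist_le_or {c : Finset (Fin N)} {x y z : Fin N} (h : IsNext c x y) (hz : z ∈ c) :
    cdist x y ≤ cdist x z ∨ cdist x z = 0 := by
  by_cases hzx : z = x
  · rw [hzx, cdist_self]; exact Or.inr rfl
  · exact Or.inl (h.cdist_le hz hzx)

lemma exists_isNext {c : Finset (Fin N)} {x z : Fin N} (hx : x ∈ c) (hz : z ∈ c) (hzx : z ≠ x) :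
    ∃ y, IsNext c x y := by
  obtain ⟨y, hy, hmin⟩ := exists_min_image (c.erase x) (cdist x) ⟨z, mem_erase.2 ⟨hzx, hz⟩⟩
  rw [mem_erase] at hy
  exact ⟨y, hx, hy.2, hy.1, fun u hu hux => hmin u (mem_erase.2 ⟨hux, hu⟩)⟩

lemma exists_isNext_around {c : Finset (Fin N)} {p x z : Fin N} (hp : p ∉ c) (hx : x ∈ c)
    (hz : z ∈ c) (hzx : z ≠ x) :
    ∃ v v', IsNext c v v' ∧ 0 < cdist v p ∧ cdist v p < cdist v v' := by
  obtain ⟨v, hv, hmin⟩ := exists_min_image c (cdist · p) ⟨x, hx⟩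
  obtain ⟨v', hvv'⟩ : ∃ v', IsNext c v v' := by
    by_cases hxv : x = v
    · exact exists_isNext hv hz (hxv ▸ hzx)
    · exact exists_isNext hv hx hxv
  refine ⟨v, v', hvv', cdist_pos (fun h => hp (h ▸ hv)), ?_⟩
  have hv'p : cdist v p ≤ cdist v' p := hmin v' hvv'.2.1
  have hne : cdist v p ≠ cdist v v' := fun h => hp (eq_of_cdist_eq h ▸ hvv'.2.1)
  have := cdist_pos hvv'.2.2.1
  have := cdist_add_cdist v v' p
  have := cdist_lt v' p
  omega

lemma four_le_card_of_cdist_lt {c : Finset (Fin N)} {x y z w : Fin N} (hx : x ∈ c) (hy : y ∈ c)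
    (hz : z ∈ c) (hw : w ∈ c) (hxy : 0 < cdist x y) (hyz : cdist x y < cdist x z)
    (hzw : cdist x z < cdist x w) : 4 ≤ c.card := by
  have hne : ∀ {u v}, cdist x u ≠ cdist x v → u ≠ v := fun h huv => h (huv ▸ rfl)
  have h0 := cdist_self x
  calc 4 = ({x, y, z, w} : Finset (Fin N)).card := by
        rw [card_insert_of_notMem, card_insert_of_notMem, card_pair]
        · exact hne (by omega)
        · simp only [mem_insert, mem_singleton, not_or]; exact ⟨hne (by omega), hne (by omega)⟩
        · simp only [mem_insert, mem_singleton, not_or]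
          exact ⟨hne (by omega), hne (by omega), hne (by omega)⟩
    _ ≤ c.card := card_le_card (by simp [insert_subset_iff, hx, hy, hz, hw])

lemma exists_lt_lt_lt_of_three_lt_card {α : Type*} [LinearOrder α] {s : Finset α}
    (h : 3 < s.card) : ∃ x ∈ s, ∃ y ∈ s, ∃ z ∈ s, ∃ w ∈ s, x < y ∧ y < z ∧ z < w := by
  let f := s.orderEmbOfFin rfl
  have hf : ∀ i, f i ∈ s := s.orderEmbOfFin_mem rfl
  exact ⟨f ⟨0, by omega⟩, hf _, f ⟨1, by omega⟩, hf _, f ⟨2, by omega⟩, hf _, f ⟨3, by omega⟩,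
    hf _, f.strictMono (by simp), f.strictMono (by simp), f.strictMono (by simp)⟩

section Cells

variable {S : Finset (Finset (Fin N))} {c : Finset (Fin N)}

lemma IsCell.isNext_of_pair_mem (hc : IsCell N S c) {x z : Fin N} (h : {x, z} ∈ S)
    (hx : x ∈ c) (hz : z ∈ c) : IsNext c x z ∨ IsNext c z x := by
  obtain ⟨x', z', he, hnext⟩ := hc.2.2 _ h (by simp [insert_subset_iff, hx, hz])
  rcases pair_eq_pair_iff.1 he with ⟨rfl, rfl⟩ | ⟨rfl, rfl⟩ <;> tauto

lemma IsCell.not_crosses_of_notMem (hc : IsCell N S c) (hS : IsDissection N S) {x z p q : Fin N}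
    (hx : x ∈ c) (hz : z ∈ c) (hf : {p, q} ∈ S) (hxp : 0 < cdist x p)
    (hpz : cdist x p < cdist x z) (hzq : cdist x z < cdist x q) (hp : p ∉ c) : False := by
  obtain ⟨v, v', hnext, hvp, hpv'⟩ :=
    exists_isNext_around hp hx hz (fun h => by rw [h, cdist_self] at hpz; omega)
  -- the arc from `v` to `v'` contains `p` but no vertex of `c`, so it lies between `x` and `z`
  have hv'q : cdist v v' < cdist v q := by
    have := hnext.cdist_le_or hx
    have := hnext.cdist_le_or hz
    have : cdist x v ≠ cdist x p := fun h => hp (eq_of_cdist_eq h ▸ hnext.1)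
    have : cdist x v' ≠ cdist x p := fun h => hp (eq_of_cdist_eq h ▸ hnext.2.1)
    have := cdist_add_cdist x v p; have := cdist_add_cdist x v z; have := cdist_add_cdist x v q
    have := cdist_add_cdist x v v'; have := cdist_add_cdist x v x
    have := cdist_lt x q; have := cdist_lt x v; have := cdist_lt x v'; have := cdist_lt v x
    have := cdist_lt v q; have := cdist_lt v z; have := cdist_lt v v'; have := cdist_self x
    omega
  rcases hc.2.1 v v' hnext with hside | hmem
  · rw [isSide_pair_iff_cdist hnext.2.2.1.symm] at hside
    have := cdist_add_cdist_rev hnext.2.2.1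
    have := cdist_lt v q
    omega
  · exact hS.2 _ hmem _ hf (crosses_iff_cdist.2 (Or.inl ⟨hvp, hpv', hv'q⟩))

lemma IsCell.not_crosses_of_mem (hc : IsCell N S c) {x z p q : Fin N} (hx : x ∈ c) (hz : z ∈ c)
    (hf : {p, q} ∈ S) (hxp : 0 < cdist x p) (hpz : cdist x p < cdist x z)
    (hzq : cdist x z < cdist x q) (hp : p ∈ c) (hq : q ∈ c) : False := by
  have := cdist_add_cdist x p q; have := cdist_add_cdist x p z; have := cdist_add_cdist x q x
  have := cdist_add_cdist x q p; have := cdist_lt p q; have := cdist_lt p z; have := cdist_lt q x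
  have := cdist_lt q p; have := cdist_lt x q; have := cdist_self x
  rcases hc.isNext_of_pair_mem hf hp hq with h | h
  · have := h.cdist_le hz (fun h => by rw [h] at hpz; omega)
    omega
  · have := h.cdist_le hx (fun h => by rw [h, cdist_self] at hzq; omega)
    omega

lemma IsCell.not_crosses_chord (hc : IsCell N S c) (hS : IsDissection N S) {x z : Fin N}
    (hx : x ∈ c) (hz : z ∈ c) : ∀ f ∈ S, ¬ Crosses N {x, z} f := by
  intro f hf hcr
  obtain ⟨p, q, -, rfl⟩ := card_eq_two.1 (hS.1 f hf).1
  have key : ∀ {p q : Fin N}, {p, q} ∈ S → 0 < cdist x p → cdist x p < cdist x z →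
      cdist x z < cdist x q → False := by
    intro p q hf hxp hpz hzq
    by_cases hp : p ∈ c
    · by_cases hq : q ∈ c
      · exact hc.not_crosses_of_mem hx hz hf hxp hpz hzq hp hq
      · have := cdist_add_cdist x z q; have := cdist_add_cdist x z x
        have := cdist_add_cdist x z p; have := cdist_lt x q; have := cdist_lt z x
        have := cdist_lt z p; have := cdist_lt z q; have := cdist_self x
        rw [pair_comm] at hf
        exact hc.not_crosses_of_notMem hS hz hx hf (by omega) (by omega) (by omega) hq
    · exact hc.not_crosses_of_notMem hS hx hz hf hxp hpz hzq hp
  rcases crosses_iff_cdist.1 hcr with ⟨h1, h2, h3⟩ | ⟨h1, h2, h3⟩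
  · exact key hf h1 h2 h3
  · exact key (pair_comm p q ▸ hf) h1 h2 h3

theorem IsCell.card_eq_three (hc : IsCell N S c) (hS : IsMaxDissection N S) : c.card = 3 := by
  by_contra hne
  obtain ⟨x, hx, y, hy, z, hz, w, hw, hxy, hyz, hzw⟩ :=
    exists_lt_lt_lt_of_three_lt_card (show 3 < c.card by have := hc.1; omega)
  have hxz : IsDiag N {x, z} :=
    ⟨card_pair (hxy.trans hyz).ne, by rw [isSide_pair_iff_of_lt (hxy.trans hyz)]; omega⟩
  rcases hc.isNext_of_pair_mem (hS.2 _ hxz (hc.not_crosses_chord hS.1 hx hz)) hx hz with h | h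
  · have := h.cdist_le hy hxy.ne'
    simp only [cdist_eq] at this
    split_ifs at this <;> omega
  · have := h.cdist_le hw hzw.ne'
    simp only [cdist_eq] at this
    split_ifs at this <;> omega

end Cells

section CellThrough

variable {S : Finset (Finset (Fin N))}

def InArc (p q v : Fin N) : Prop := 0 < cdist p v ∧ cdist p v < cdist p q

def IsCutOff (S : Finset (Finset (Fin N))) (a b v : Fin N) : Prop :=
  ∃ p q, {p, q} ∈ S ∧ InArc p q v ∧ ¬ InArc p q a ∧ ¬ InArc p q b

lemma crosses_of_cdist_lt {x p q r s : Fin N} (h1 : cdist x p < cdist x r)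
    (h2 : cdist x r < cdist x q) (h3 : cdist x q < cdist x s) : Crosses N {p, q} {r, s} := by
  have := cdist_add_cdist x p r; have := cdist_add_cdist x p q; have := cdist_add_cdist x p s
  have := cdist_lt p r; have := cdist_lt p q; have := cdist_lt p s; have := cdist_lt x s
  exact crosses_iff_cdist.2 (Or.inl ⟨by omega, by omega, by omega⟩)

lemma exists_arc_within_of_isCutOff {a b x y w : Fin N} (hx : ¬ IsCutOff S a b x)
    (hy : ¬ IsCutOff S a b y) (hw : InArc x y w) (hcut : IsCutOff S a b w) :
    ∃ p q, {p, q} ∈ S ∧ ¬ InArc p q a ∧ ¬ InArc p q b ∧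
      cdist x p < cdist x w ∧ cdist x w < cdist x q ∧ cdist x q ≤ cdist x y := by
  obtain ⟨p, q, hS, hpw, hpa, hpb⟩ := hcut
  have hpx : ¬ InArc p q x := fun h => hx ⟨p, q, hS, h, hpa, hpb⟩
  have hpy : ¬ InArc p q y := fun h => hy ⟨p, q, hS, h, hpa, hpb⟩
  unfold InArc at hw hpw hpx hpy
  have := cdist_add_cdist x p w; have := cdist_add_cdist x p q; have := cdist_add_cdist x p y
  have := cdist_add_cdist x p x; have := cdist_self x; have := cdist_lt x p; have := cdist_lt x q
  have := cdist_lt x y; have := cdist_lt p q; have := cdist_lt p w; have := cdist_lt p x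
  have := cdist_lt p y; have := cdist_lt x w
  exact ⟨p, q, hS, hpa, hpb, by omega, by omega, by omega⟩

lemma pair_mem_of_forall_isCutOff (hS : IsDissection N S) {a b x y : Fin N}
    (hxy : 2 ≤ cdist x y) (hx : ¬ IsCutOff S a b x) (hy : ¬ IsCutOff S a b y)
    (hall : ∀ w, InArc x y w → IsCutOff S a b w) : {x, y} ∈ S := by
  classical
  have hN := cdist_lt x y
  have : NeZero N := ⟨by omega⟩
  -- the diagonals of `S` spanning a subarc of the arc from `x` to `y` and cutting off
  -- vertices from `a` and `b`; a longest one spans the whole arc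
  set T := univ.filter fun pq : Fin N × Fin N => {pq.1, pq.2} ∈ S ∧ ¬ InArc pq.1 pq.2 a ∧
    ¬ InArc pq.1 pq.2 b ∧ cdist x pq.1 < cdist x pq.2 ∧ cdist x pq.2 ≤ cdist x y
  have hcover : ∀ w, InArc x y w →
      ∃ pq ∈ T, cdist x pq.1 < cdist x w ∧ cdist x w < cdist x pq.2 := by
    intro w hw
    obtain ⟨p, q, hpq, hpa, hpb, hpw, hwq, hqy⟩ :=
      exists_arc_within_of_isCutOff hx hy hw (hall w hw)
    exact ⟨(p, q), by simp [T, hpq, hpa, hpb, hqy]; omega, hpw, hwq⟩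
  have hx1 : cdist x (x + 1) = 1 := by
    rw [cdist, add_sub_cancel_left, Fin.val_one', Nat.mod_eq_of_lt (by omega)]
  obtain ⟨pq₀, hpq₀, -⟩ := hcover (x + 1) ⟨by omega, by omega⟩
  obtain ⟨⟨p, q⟩, hpq, hmax⟩ := exists_max_image T (fun pq => cdist x pq.2 - cdist x pq.1)
    ⟨pq₀, hpq₀⟩
  simp only [T, mem_filter, mem_univ, true_and] at hpq
  obtain ⟨hpqS, -, -, hpq, hqy⟩ := hpq
  have hp : cdist x p = 0 := by
    by_contra hp
    obtain ⟨⟨p', q'⟩, hpq', h1, h2⟩ := hcover p ⟨by omega, by omega⟩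
    have := hmax _ hpq'
    simp only [T, mem_filter, mem_univ, true_and] at hpq' this h1 h2
    rcases Nat.lt_or_ge (cdist x q') (cdist x q) with h | h
    · exact hS.2 _ hpq'.1 _ hpqS (crosses_of_cdist_lt h1 h2 h)
    · omega
  have hq : cdist x q = cdist x y := by
    by_contra hq
    obtain ⟨⟨p', q'⟩, hpq', h1, h2⟩ := hcover q ⟨by omega, by omega⟩
    have := hmax _ hpq'
    simp only [T, mem_filter, mem_univ, true_and] at hpq' this h1 h2
    rcases Nat.eq_zero_or_pos (cdist x p') with h | h
    · omega
    · exact hS.2 _ hpqS _ hpq'.1 (crosses_of_cdist_lt (by omega) h1 h2)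
  rwa [← eq_of_cdist_eq (hp.trans (cdist_self x).symm), ← eq_of_cdist_eq hq]

open Classical in
/-- When the chord `{a, b}` crosses no diagonal of `S`, the vertices not cut off from `a` and `b`
form the cell of `S` containing that chord. -/
noncomputable def cellThrough (S : Finset (Finset (Fin N))) (a b : Fin N) : Finset (Fin N) :=
  univ.filter fun v => ¬ IsCutOff S a b v

variable {a b : Fin N}

lemma mem_cellThrough {v : Fin N} : v ∈ cellThrough S a b ↔ ¬ IsCutOff S a b v := by
  simp [cellThrough]

lemma left_mem_cellThrough : a ∈ cellThrough S a b :=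
  mem_cellThrough.2 fun ⟨_, _, _, h, ha, _⟩ => ha h

lemma right_mem_cellThrough : b ∈ cellThrough S a b :=
  mem_cellThrough.2 fun ⟨_, _, _, h, _, hb⟩ => hb h

lemma cellThrough_comm : cellThrough S a b = cellThrough S b a := by
  ext v
  simp only [mem_cellThrough, IsCutOff]
  constructor <;> exact fun h ⟨p, q, hS, hv, ha, hb⟩ => h ⟨p, q, hS, hv, hb, ha⟩

lemma exists_mem_cellThrough_inArc (hS : IsDissection N S) (hab : 2 ≤ cdist a b)
    (habS : {a, b} ∉ S) : ∃ w ∈ cellThrough S a b, InArc a b w := by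
  by_contra! h
  refine habS (pair_mem_of_forall_isCutOff hS hab (mem_cellThrough.1 left_mem_cellThrough)
    (mem_cellThrough.1 right_mem_cellThrough) fun w hw => ?_)
  by_contra hw'
  exact h w (mem_cellThrough.2 hw') hw

lemma isSide_or_mem_of_isNext_cellThrough (hS : IsDissection N S) {x y : Fin N}
    (h : IsNext (cellThrough S a b) x y) : IsSide N {x, y} ∨ {x, y} ∈ S := by
  refine or_iff_not_imp_left.2 fun hside => pair_mem_of_forall_isCutOff hS ?_
    (mem_cellThrough.1 h.1) (mem_cellThrough.1 h.2.1) fun w hw => ?_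
  · rw [isSide_pair_iff_cdist h.2.2.1.symm] at hside
    have := cdist_pos h.2.2.1
    omega
  · by_contra hw'
    have := h.cdist_le (mem_cellThrough.2 hw') fun e => by subst e; simp [InArc, cdist_self] at hw
    exact absurd hw.2 (not_lt.2 this)

lemma isNext_cellThrough {p q : Fin N} (h : {p, q} ∈ S) (hp : p ∈ cellThrough S a b)
    (hq : q ∈ cellThrough S a b) (hqp : q ≠ p) (ha : ¬ InArc p q a) (hb : ¬ InArc p q b) :
    IsNext (cellThrough S a b) p q :=
  ⟨hp, hq, hqp, fun _ hz hzp => not_lt.1 fun hlt =>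
    mem_cellThrough.1 hz ⟨p, q, h, ⟨cdist_pos hzp, hlt⟩, ha, hb⟩⟩

lemma not_inArc_of_not_crosses {p q : Fin N} (hpq : p ≠ q) (h : ¬ Crosses N {a, b} {p, q}) :
    ¬ InArc p q a ∧ ¬ InArc p q b ∨ ¬ InArc q p a ∧ ¬ InArc q p b := by
  have h' : ¬ Crosses N {p, q} {a, b} := fun h' => h (crosses_symm h')
  rw [crosses_iff_cdist] at h'
  unfold InArc
  have := cdist_add_cdist p q a; have := cdist_add_cdist p q b
  have := cdist_add_cdist_rev hpq.symm; have := cdist_lt p a; have := cdist_lt p b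
  have := cdist_lt q a; have := cdist_lt q b
  omega

lemma isCell_cellThrough (hS : IsDissection N S) (hab : ∀ f ∈ S, ¬ Crosses N {a, b} f)
    (hcard : 3 ≤ (cellThrough S a b).card) : IsCell N S (cellThrough S a b) := by
  refine ⟨hcard, fun x y h => isSide_or_mem_of_isNext_cellThrough hS h, fun e he hsub => ?_⟩
  obtain ⟨p, q, hpq, rfl⟩ := card_eq_two.1 (hS.1 e he).1
  have hp := hsub (mem_insert_self p {q})
  have hq := hsub (mem_insert_of_mem (mem_singleton_self q))
  rcases not_inArc_of_not_crosses hpq (hab _ he) with ⟨ha, hb⟩ | ⟨ha, hb⟩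
  · exact ⟨p, q, rfl, Or.inl (isNext_cellThrough he hp hq hpq.symm ha hb)⟩
  · exact ⟨p, q, rfl, Or.inr (isNext_cellThrough (pair_comm p q ▸ he) hq hp hpq ha hb)⟩

theorem isMaxDissection_of_forall_isCell (hS : IsDissection N S)
    (h : ∀ c, IsCell N S c → c.card = 3) : IsMaxDissection N S := by
  refine ⟨hS, fun e he hcompat => ?_⟩
  by_contra heS
  obtain ⟨a, b, hab, rfl⟩ := card_eq_two.1 he.1
  have hside := he.2
  rw [isSide_pair_iff_cdist hab] at hside
  have := cdist_pos hab
  have := cdist_pos hab.symm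
  have := cdist_add_cdist_rev hab.symm
  -- each arc between `a` and `b` contains a vertex of the cell through `{a, b}`, so it has four
  obtain ⟨w, hw, haw, hwb⟩ := exists_mem_cellThrough_inArc (a := a) (b := b) hS (by omega) heS
  obtain ⟨w', hw', hbw', hw'a⟩ :=
    exists_mem_cellThrough_inArc (a := b) (b := a) hS (by omega) (by rwa [pair_comm] at heS)
  rw [← cellThrough_comm] at hw'
  have := cdist_add_cdist a b w'
  have := cdist_lt a w'
  have h4 := four_le_card_of_cdist_lt left_mem_cellThrough hw right_mem_cellThrough hw' haw hwb
    (by omega)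
  have := h _ (isCell_cellThrough hS hcompat (by omega))
  omega

theorem isMaxDissection_iff_forall_isCell :
    IsMaxDissection N S ↔ IsDissection N S ∧ ∀ c, IsCell N S c → c.card = 3 :=
  ⟨fun h => ⟨h.1, fun _ hc => hc.card_eq_three h⟩,
    fun h => isMaxDissection_of_forall_isCell h.1 h.2⟩

end CellThrough

section Interval

variable {m : ℕ}

lemma exists_eq_pair_of_map_eq_pair (σ : Fin m ↪o Fin N) {e : Finset (Fin m)} {x y : Fin N}
    (h : e.map σ.toEmbedding = {x, y}) : ∃ x' y', e = {x', y'} ∧ σ x' = x ∧ σ y' = y := by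
  have hx : x ∈ e.map σ.toEmbedding := h ▸ mem_insert_self x {y}
  have hy : y ∈ e.map σ.toEmbedding := h ▸ mem_insert_of_mem (mem_singleton_self y)
  obtain ⟨x', -, rfl⟩ := mem_map.1 hx
  obtain ⟨y', -, rfl⟩ := mem_map.1 hy
  refine ⟨x', y', map_injective σ.toEmbedding ?_, rfl, rfl⟩
  rw [h]
  simp

lemma crosses_map_iff (σ : Fin m ↪o Fin N) {e f : Finset (Fin m)} :
    Crosses N (e.map σ.toEmbedding) (f.map σ.toEmbedding) ↔ Crosses m e f := by
  constructor
  · rintro ⟨a, b, c, d, h1, h2, h3, ⟨he, hf⟩ | ⟨he, hf⟩⟩ <;>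
      obtain ⟨a', b', rfl, rfl, rfl⟩ := exists_eq_pair_of_map_eq_pair σ he <;>
      obtain ⟨c', d', rfl, rfl, rfl⟩ := exists_eq_pair_of_map_eq_pair σ hf
    · exact ⟨a', b', c', d', σ.lt_iff_lt.1 h1, σ.lt_iff_lt.1 h2, σ.lt_iff_lt.1 h3,
        Or.inl ⟨rfl, rfl⟩⟩
    · exact ⟨c', d', a', b', σ.lt_iff_lt.1 h1, σ.lt_iff_lt.1 h2, σ.lt_iff_lt.1 h3,
        Or.inr ⟨rfl, rfl⟩⟩
  · rintro ⟨a, b, c, d, h1, h2, h3, ⟨rfl, rfl⟩ | ⟨rfl, rfl⟩⟩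
    · exact ⟨σ a, σ b, σ c, σ d, σ.lt_iff_lt.2 h1, σ.lt_iff_lt.2 h2, σ.lt_iff_lt.2 h3,
        Or.inl ⟨by simp, by simp⟩⟩
    · exact ⟨σ a, σ b, σ c, σ d, σ.lt_iff_lt.2 h1, σ.lt_iff_lt.2 h2, σ.lt_iff_lt.2 h3,
        Or.inr ⟨by simp, by simp⟩⟩

lemma not_crosses_zero_last (f : Finset (Fin (m + 1))) : ¬ Crosses (m + 1) {0, Fin.last m} f := by
  rintro ⟨a, b, c, d, h1, h2, h3, ⟨he, -⟩ | ⟨he, -⟩⟩ <;>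
    rcases pair_eq_pair_iff.1 he with ⟨rfl, rfl⟩ | ⟨rfl, rfl⟩ <;>
    simp only [Fin.lt_def, Fin.val_zero, Fin.val_last] at h1 h2 h3 <;> omega

lemma isSide_zero_last (m : ℕ) : IsSide (m + 2) {0, Fin.last (m + 1)} :=
  (isSide_pair_iff_of_lt (Fin.lt_def.2 (by simp))).2 (Or.inr ⟨rfl, by simp⟩)

def intervalEmb (t : ℕ) (h : t + m + 1 ≤ N) : Fin (m + 1) ↪o Fin N :=
  OrderEmbedding.ofStrictMono (fun v => ⟨v + t, by omega⟩) fun _ _ hlt => Fin.mk_lt_mk.2 (by omega)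

variable {t : ℕ} {h : t + m + 1 ≤ N}

@[simp]
lemma intervalEmb_val (v : Fin (m + 1)) : (intervalEmb t h v).val = v.val + t := rfl

lemma mem_map_intervalEmb {e : Finset (Fin (m + 1))} {v : Fin N}
    (hv : v ∈ e.map (intervalEmb t h).toEmbedding) : t ≤ v.val ∧ v.val ≤ t + m := by
  obtain ⟨u, -, rfl⟩ := mem_map.1 hv
  have := u.isLt
  simp only [RelEmbedding.coe_toEmbedding, intervalEmb_val]
  omega

lemma exists_eq_map_intervalEmb {e : Finset (Fin N)} (he : ∀ v ∈ e, t ≤ v.val ∧ v.val ≤ t + m) :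
    ∃ e' : Finset (Fin (m + 1)), e = e'.map (intervalEmb t h).toEmbedding := by
  have hsub : e ⊆ univ.map (intervalEmb t h).toEmbedding := fun v hv => by
    have := he v hv
    exact mem_map.2 ⟨⟨v.val - t, by omega⟩, mem_univ _, Fin.ext (by simp; omega)⟩
  obtain ⟨e', -, he'⟩ := subset_map_iff.1 hsub
  exact ⟨e', he'⟩

lemma isDiag_map_intervalEmb_iff {e : Finset (Fin (m + 1))} :
    IsDiag N (e.map (intervalEmb t h).toEmbedding) ∧ e ≠ {0, Fin.last m} ↔ IsDiag (m + 1) e := by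
  unfold IsDiag
  rw [card_map]
  by_cases he : e.card = 2
  · obtain ⟨p, q, hpq, rfl⟩ := exists_pair_lt he
    have hpq' : intervalEmb t h p < intervalEmb t h q := (intervalEmb t h).lt_iff_lt.2 hpq
    simp only [map_insert, map_singleton, RelEmbedding.coe_toEmbedding]
    rw [isSide_pair_iff_of_lt hpq, isSide_pair_iff_of_lt hpq', Ne, pair_eq_pair_iff]
    simp only [intervalEmb_val, Fin.ext_iff, Fin.val_zero, Fin.val_last]
    omega
  · simp [he]

lemma crosses_map_zero_last_of_crosses {f g : Finset (Fin N)}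
    (hg : ∀ v ∈ g, t ≤ v.val ∧ v.val ≤ t + m) (hf : ¬ ∀ v ∈ f, t ≤ v.val ∧ v.val ≤ t + m)
    (hfg : Crosses N f g) :
    Crosses N f (({0, Fin.last m} : Finset (Fin (m + 1))).map (intervalEmb t h).toEmbedding) := by
  obtain ⟨c, d, hcd, rfl⟩ := exists_pair_lt hfg.card_left
  obtain ⟨a, b, hab, rfl⟩ := exists_pair_lt (crosses_symm hfg).card_left
  have ha := hg a (mem_insert_self a {b})
  have hb := hg b (mem_insert_of_mem (mem_singleton_self b))
  have h0 : intervalEmb t h 0 < intervalEmb t h (Fin.last m) := Fin.lt_def.2 (by simp; omega)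
  simp only [mem_insert, mem_singleton, forall_eq_or_imp, forall_eq] at hf
  simp only [map_insert, map_singleton, RelEmbedding.coe_toEmbedding]
  rw [crosses_pair_iff_of_lt hcd hab] at hfg
  rw [crosses_pair_iff_of_lt hcd h0]
  simp only [Fin.lt_def, intervalEmb_val, Fin.val_zero, Fin.val_last] at hfg ⊢
  omega

end Interval

section Pullback

variable {m : ℕ} {S : Finset (Finset (Fin N))}

open Classical in
noncomputable def pullback (σ : Fin m ↪o Fin N) (S : Finset (Finset (Fin N))) :
    Finset (Finset (Fin m)) :=
  univ.filter fun e => IsDiag m e ∧ e.map σ.toEmbedding ∈ S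

lemma mem_pullback {σ : Fin m ↪o Fin N} {e : Finset (Fin m)} :
    e ∈ pullback σ S ↔ IsDiag m e ∧ e.map σ.toEmbedding ∈ S := by
  simp [pullback]

lemma IsDissection.pullback (hS : IsDissection N S) (σ : Fin m ↪o Fin N) :
    IsDissection m (pullback σ S) :=
  ⟨fun _ he => (mem_pullback.1 he).1, fun _ he _ hf hef =>
    hS.2 _ (mem_pullback.1 he).2 _ (mem_pullback.1 hf).2 ((crosses_map_iff σ).2 hef)⟩

variable {t : ℕ} {h : t + m + 1 ≤ N}

lemma exists_eq_map_mem_pullback (hS : ∀ e ∈ S, IsDiag N e) {f : Finset (Fin N)} (hf : f ∈ S)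
    (hfI : ∀ v ∈ f, t ≤ v.val ∧ v.val ≤ t + m) :
    ∃ f', f = f'.map (intervalEmb t h).toEmbedding ∧
      (f' ∈ pullback (intervalEmb t h) S ∨ f' = {0, Fin.last m}) := by
  obtain ⟨f', rfl⟩ := exists_eq_map_intervalEmb (h := h) hfI
  refine ⟨f', rfl, or_iff_not_imp_right.2 fun hb => ?_⟩
  exact mem_pullback.2 ⟨isDiag_map_intervalEmb_iff.1 ⟨hS _ hf, hb⟩, hf⟩

theorem IsMaxDissection.pullback_intervalEmb (hS : IsMaxDissection N S)
    (hbd : IsSide N (({0, Fin.last m} : Finset _).map (intervalEmb t h).toEmbedding) ∨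
      ({0, Fin.last m} : Finset _).map (intervalEmb t h).toEmbedding ∈ S) :
    IsMaxDissection (m + 1) (pullback (intervalEmb t h) S) := by
  refine ⟨hS.1.pullback _, fun g hg hcompat => mem_pullback.2
    ⟨hg, hS.2 _ (isDiag_map_intervalEmb_iff.2 hg).1 fun f hf hcr => ?_⟩⟩
  by_cases hfI : ∀ v ∈ f, t ≤ v.val ∧ v.val ≤ t + m
  · obtain ⟨f', rfl, hf' | rfl⟩ := exists_eq_map_mem_pullback (h := h) hS.1.1 hf hfI
    · exact hcompat f' hf' ((crosses_map_iff _).1 hcr)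
    · exact not_crosses_zero_last g ((crosses_map_iff _).1 (crosses_symm hcr))
  · have := crosses_map_zero_last_of_crosses (h := h) (fun v hv => mem_map_intervalEmb hv) hfI
      (crosses_symm hcr)
    rcases hbd with hside | hmem
    · exact hside.not_crosses f (crosses_symm this)
    · exact hS.1.2 f hf _ hmem this

lemma mem_of_isMaxDissection_pullback
    (hP : IsMaxDissection (m + 1) (pullback (intervalEmb t h) S))
    (hbd : IsSide N (({0, Fin.last m} : Finset _).map (intervalEmb t h).toEmbedding) ∨
      ({0, Fin.last m} : Finset _).map (intervalEmb t h).toEmbedding ∈ S)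
    {g : Finset (Fin N)} (hg : IsDiag N g) (hgI : ∀ v ∈ g, t ≤ v.val ∧ v.val ≤ t + m)
    (hcompat : ∀ f ∈ S, ¬ Crosses N g f) : g ∈ S := by
  obtain ⟨g', rfl⟩ := exists_eq_map_intervalEmb (h := h) hgI
  by_cases hb : g' = {0, Fin.last m}
  · subst hb
    exact hbd.resolve_left hg.2
  · refine (mem_pullback.1 (hP.2 g' (isDiag_map_intervalEmb_iff.1 ⟨hg, hb⟩) fun f' hf' hcr => ?_)).2
    exact hcompat _ (mem_pullback.1 hf').2 ((crosses_map_iff _).2 hcr)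

lemma not_crosses_of_isDissection_pullback (hS : ∀ e ∈ S, IsDiag N e)
    (hP : IsDissection (m + 1) (pullback (intervalEmb t h) S)) {e f : Finset (Fin N)}
    (he : e ∈ S) (hf : f ∈ S) (heI : ∀ v ∈ e, t ≤ v.val ∧ v.val ≤ t + m)
    (hfI : ∀ v ∈ f, t ≤ v.val ∧ v.val ≤ t + m) : ¬ Crosses N e f := by
  obtain ⟨e', rfl, he'⟩ := exists_eq_map_mem_pullback (h := h) hS he heI
  obtain ⟨f', rfl, hf'⟩ := exists_eq_map_mem_pullback (h := h) hS hf hfI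
  rw [crosses_map_iff]
  rcases he' with he' | rfl
  · rcases hf' with hf' | rfl
    · exact hP.2 e' he' f' hf'
    · exact fun hcr => not_crosses_zero_last e' (crosses_symm hcr)
  · exact not_crosses_zero_last f'

end Pullback

section Apex

variable {n : ℕ} {S : Finset (Finset (Fin (n + 1)))}

/-- `k` is the third vertex of the cell of `S` on the side `{0, n}`. -/
def IsApex (S : Finset (Finset (Fin (n + 1)))) (k : Fin (n + 1)) : Prop :=
  0 < k ∧ k < Fin.last n ∧ (IsSide (n + 1) {0, k} ∨ {0, k} ∈ S) ∧
    (IsSide (n + 1) {k, Fin.last n} ∨ {k, Fin.last n} ∈ S)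

lemma IsApex.eq (hS : IsDissection (n + 1) S) {k k' : Fin (n + 1)} (hk : IsApex S k)
    (hk' : IsApex S k') : k = k' := by
  have key : ∀ {k k' : Fin (n + 1)}, IsApex S k → IsApex S k' → ¬ k < k' := by
    intro k k' hk hk' hlt
    have hcr : Crosses (n + 1) {0, k'} {k, Fin.last n} :=
      (crosses_pair_iff_of_lt hk'.1 hk.2.1).2 (Or.inl ⟨hk.1, hlt, hk'.2.1⟩)
    rcases hk'.2.2.1 with hside | hmem
    · exact hside.not_crosses _ hcr
    · exact not_crosses_of_isSide_or_mem (hS.2 _ hmem) hk.2.2.2 hcr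
  exact le_antisymm (not_lt.1 (key hk' hk)) (not_lt.1 (key hk hk'))

theorem IsMaxDissection.exists_isApex (hS : IsMaxDissection (n + 1) S) (hn : 2 ≤ n) :
    ∃ k, IsApex S k := by
  classical
  -- the largest `K < n` joined to `0` by an edge
  set C := univ.filter fun x : Fin (n + 1) =>
    0 < x ∧ x < Fin.last n ∧ (IsSide (n + 1) {0, x} ∨ {0, x} ∈ S)
  have hC : C.Nonempty := ⟨⟨1, by omega⟩, by
    simp only [C, mem_filter, mem_univ, true_and, Fin.lt_def, Fin.val_zero, Fin.val_last]
    exact ⟨by omega, by omega, Or.inl ((isSide_pair_iff_of_lt (Fin.lt_def.2 (by simp))).2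
      (Or.inl rfl))⟩⟩
  obtain ⟨hK0, hKn, hK⟩ : 0 < C.max' hC ∧ C.max' hC < Fin.last n ∧
      (IsSide (n + 1) {0, C.max' hC} ∨ {0, C.max' hC} ∈ S) := by
    simpa [C] using C.max'_mem hC
  refine ⟨C.max' hC, hK0, hKn, hK, or_iff_not_imp_left.2 fun hside =>
    hS.2 _ ⟨card_pair hKn.ne, hside⟩ fun f hf hcr => ?_⟩
  obtain ⟨p, q, hpq, rfl⟩ := exists_pair_lt (hS.1.1 f hf).1
  rcases (crosses_pair_iff_of_lt hKn hpq).1 hcr with ⟨-, -, hq⟩ | ⟨hpK, hKq, hqn⟩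
  · exact absurd hq (not_lt.2 (Fin.le_last q))
  by_cases hp : p = 0
  · subst hp
    have hqC : q ∈ C := by simpa [C] using ⟨hpq, hqn, Or.inr hf⟩
    exact absurd (C.le_max' q hqC) (not_le.2 hKq)
  · exact not_crosses_of_isSide_or_mem (hS.1.2 _ hf) hK
      ((crosses_pair_iff_of_lt hpq hK0).2 (Or.inr ⟨Fin.pos_iff_ne_zero.2 hp, hpK, hKq⟩))

lemma IsApex.le_or_ge {k : Fin (n + 1)} (hk : IsApex S k) {g : Finset (Fin (n + 1))}
    (hg : IsDiag (n + 1) g) (hcompat : ∀ f ∈ S, ¬ Crosses (n + 1) g f) :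
    (∀ v ∈ g, v ≤ k) ∨ ∀ v ∈ g, k ≤ v := by
  obtain ⟨p, q, hpq, rfl⟩ := exists_pair_lt hg.1
  simp only [mem_insert, mem_singleton, forall_eq_or_imp, forall_eq]
  rcases le_or_gt q k with hqk | hkq
  · exact Or.inl ⟨hpq.le.trans hqk, hqk⟩
  rcases le_or_gt k p with hkp | hpk
  · exact Or.inr ⟨hkp, hkp.trans hpq.le⟩
  exfalso
  by_cases hp : p = 0
  · subst hp
    have hqn : q < Fin.last n := (Fin.le_last q).lt_of_ne fun hq => hg.2 (by
      rw [isSide_pair_iff_of_lt hpq, hq]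
      simp)
    exact not_crosses_of_isSide_or_mem hcompat hk.2.2.2
      ((crosses_pair_iff_of_lt hpq hk.2.1).2 (Or.inl ⟨hk.1, hkq, hqn⟩))
  · exact not_crosses_of_isSide_or_mem hcompat hk.2.2.1
      ((crosses_pair_iff_of_lt hpq hk.1).2 (Or.inr ⟨Fin.pos_iff_ne_zero.2 hp, hpk, hkq⟩))

end Apex

section Glue

variable {a b : ℕ}

abbrev leftEmb (a b : ℕ) : Fin (a + 2) ↪o Fin (a + b + 3) := intervalEmb 0 (by omega)

abbrev rightEmb (a b : ℕ) : Fin (b + 2) ↪o Fin (a + b + 3) := intervalEmb (a + 1) (by omega)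

def apexVertex (a b : ℕ) : Fin (a + b + 3) := ⟨a + 1, by omega⟩

lemma map_leftEmb_zero_last :
    ({0, Fin.last (a + 1)} : Finset (Fin (a + 2))).map (leftEmb a b).toEmbedding =
      {0, apexVertex a b} := by
  simp only [map_insert, map_singleton, RelEmbedding.coe_toEmbedding]
  rfl

lemma map_rightEmb_zero_last :
    ({0, Fin.last (b + 1)} : Finset (Fin (b + 2))).map (rightEmb a b).toEmbedding =
      {apexVertex a b, Fin.last (a + b + 2)} := by
  simp only [map_insert, map_singleton, RelEmbedding.coe_toEmbedding]
  congr 2 <;> ext <;> simp [intervalEmb_val, apexVertex]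
  omega

lemma val_le_of_le_apexVertex {v : Fin (a + b + 3)} (h : v ≤ apexVertex a b) :
    0 ≤ v.val ∧ v.val ≤ 0 + (a + 1) := by
  rw [Fin.le_def] at h
  exact ⟨Nat.zero_le _, by simpa [apexVertex] using h⟩

lemma val_ge_of_apexVertex_le {v : Fin (a + b + 3)} (h : apexVertex a b ≤ v) :
    a + 1 ≤ v.val ∧ v.val ≤ a + 1 + (b + 1) := by
  rw [Fin.le_def] at h
  exact ⟨by simpa [apexVertex] using h, by omega⟩

lemma le_apexVertex_of_mem_map_leftEmb {e' : Finset (Fin (a + 2))} {v : Fin (a + b + 3)}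
    (hv : v ∈ e'.map (leftEmb a b).toEmbedding) : v ≤ apexVertex a b := by
  have := mem_map_intervalEmb hv
  show v.val ≤ a + 1
  omega

lemma apexVertex_le_of_mem_map_rightEmb {e' : Finset (Fin (b + 2))} {v : Fin (a + b + 3)}
    (hv : v ∈ e'.map (rightEmb a b).toEmbedding) : apexVertex a b ≤ v := by
  have := mem_map_intervalEmb hv
  show a + 1 ≤ v.val
  omega

open Classical in
noncomputable def glue (P : Finset (Finset (Fin (a + 2)))) (Q : Finset (Finset (Fin (b + 2)))) :
    Finset (Finset (Fin (a + b + 3))) :=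
  P.image (·.map (leftEmb a b).toEmbedding) ∪ Q.image (·.map (rightEmb a b).toEmbedding) ∪
    ({{0, apexVertex a b}, {apexVertex a b, Fin.last _}} : Finset (Finset (Fin (a + b + 3)))).filter
      (IsDiag _)

variable {P : Finset (Finset (Fin (a + 2)))} {Q : Finset (Finset (Fin (b + 2)))}

lemma mem_glue {e : Finset (Fin (a + b + 3))} :
    e ∈ glue P Q ↔ (∃ e' ∈ P, e'.map (leftEmb a b).toEmbedding = e) ∨
      (∃ e' ∈ Q, e'.map (rightEmb a b).toEmbedding = e) ∨
      (e = {0, apexVertex a b} ∨ e = {apexVertex a b, Fin.last _}) ∧ IsDiag _ e := by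
  simp [glue]

lemma isSide_or_mem_glue {e : Finset (Fin (a + b + 3))}
    (he : e = {0, apexVertex a b} ∨ e = {apexVertex a b, Fin.last _}) :
    IsSide _ e ∨ e ∈ glue P Q := by
  refine or_iff_not_imp_left.2 fun hside => mem_glue.2 (Or.inr (Or.inr ⟨he, ?_, hside⟩))
  rcases he with rfl | rfl <;> refine card_pair (Fin.ne_of_val_ne ?_) <;>
    simp only [apexVertex, Fin.val_zero, Fin.val_last] <;> omega

lemma isApex_glue : IsApex (glue P Q) (apexVertex a b) :=
  ⟨Fin.lt_def.2 (by simp [apexVertex]), Fin.lt_def.2 (by simp [apexVertex]),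
    isSide_or_mem_glue (Or.inl rfl), isSide_or_mem_glue (Or.inr rfl)⟩

lemma pullback_leftEmb_glue (hP : ∀ e ∈ P, IsDiag (a + 2) e) :
    pullback (leftEmb a b) (glue P Q) = P := by
  ext e'
  rw [mem_pullback]
  refine ⟨fun ⟨he', hmem⟩ => ?_, fun he' => ⟨hP e' he', mem_glue.2 (Or.inl ⟨e', he', rfl⟩)⟩⟩
  have hle : ∀ v ∈ e'.map (leftEmb a b).toEmbedding, v ≤ apexVertex a b :=
    fun v hv => le_apexVertex_of_mem_map_leftEmb hv
  rcases mem_glue.1 hmem with ⟨f', hf', hf⟩ | ⟨f', -, hf⟩ | ⟨hc | hc, -⟩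
  · rwa [← map_injective _ hf]
  · have := card_le_one_of_le_of_ge hle (hf ▸ fun v hv => apexVertex_le_of_mem_map_rightEmb hv)
    rw [card_map, he'.1] at this
    omega
  · rw [← map_leftEmb_zero_last (b := b), map_inj] at hc
    exact absurd (hc ▸ isSide_zero_last a) he'.2
  · have := hle (Fin.last _) (by rw [hc]; simp)
    simp [Fin.le_def, apexVertex] at this

lemma pullback_rightEmb_glue (hQ : ∀ e ∈ Q, IsDiag (b + 2) e) :
    pullback (rightEmb a b) (glue P Q) = Q := by
  ext e'
  rw [mem_pullback]
  refine ⟨fun ⟨he', hmem⟩ => ?_, fun he' =>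
    ⟨hQ e' he', mem_glue.2 (Or.inr (Or.inl ⟨e', he', rfl⟩))⟩⟩
  have hge : ∀ v ∈ e'.map (rightEmb a b).toEmbedding, apexVertex a b ≤ v :=
    fun v hv => apexVertex_le_of_mem_map_rightEmb hv
  rcases mem_glue.1 hmem with ⟨f', -, hf⟩ | ⟨f', hf', hf⟩ | ⟨hc | hc, -⟩
  · have := card_le_one_of_le_of_ge (hf ▸ fun v hv => le_apexVertex_of_mem_map_leftEmb hv) hge
    rw [card_map, he'.1] at this
    omega
  · rwa [← map_injective _ hf]
  · have := hge 0 (by rw [hc]; simp)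
    simp [apexVertex] at this
  · rw [← map_rightEmb_zero_last (a := a), map_inj] at hc
    exact absurd (hc ▸ isSide_zero_last b) he'.2

lemma le_or_ge_of_mem_glue {e : Finset (Fin (a + b + 3))} (he : e ∈ glue P Q) :
    (∀ v ∈ e, v ≤ apexVertex a b) ∨ ∀ v ∈ e, apexVertex a b ≤ v := by
  rcases mem_glue.1 he with ⟨e', -, rfl⟩ | ⟨e', -, rfl⟩ | ⟨rfl | rfl, -⟩
  · exact Or.inl fun v hv => le_apexVertex_of_mem_map_leftEmb hv
  · exact Or.inr fun v hv => apexVertex_le_of_mem_map_rightEmb hv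
  · exact Or.inl (by simp [Fin.le_def, apexVertex])
  · exact Or.inr (by simp [Fin.le_def, apexVertex]; omega)

theorem isMaxDissection_glue (hP : IsMaxDissection (a + 2) P) (hQ : IsMaxDissection (b + 2) Q) :
    IsMaxDissection (a + b + 3) (glue P Q) := by
  have hPL : pullback (leftEmb a b) (glue P Q) = P := pullback_leftEmb_glue hP.1.1
  have hQR : pullback (rightEmb a b) (glue P Q) = Q := pullback_rightEmb_glue hQ.1.1
  have hdiag : ∀ e ∈ glue P Q, IsDiag _ e := by
    intro e he
    rcases mem_glue.1 he with ⟨e', he', rfl⟩ | ⟨e', he', rfl⟩ | ⟨-, hd⟩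
    · exact (isDiag_map_intervalEmb_iff.2 (hP.1.1 e' he')).1
    · exact (isDiag_map_intervalEmb_iff.2 (hQ.1.1 e' he')).1
    · exact hd
  have hdiss : IsDissection _ (glue P Q) := by
    refine ⟨hdiag, fun e he f hf => ?_⟩
    rcases le_or_ge_of_mem_glue he with heL | heR <;>
      rcases le_or_ge_of_mem_glue hf with hfL | hfR
    · exact not_crosses_of_isDissection_pullback hdiag (hPL ▸ hP.1) he hf
        (fun v hv => val_le_of_le_apexVertex (heL v hv))
        (fun v hv => val_le_of_le_apexVertex (hfL v hv))
    · exact not_crosses_of_le_of_ge heL hfR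
    · exact fun h => not_crosses_of_le_of_ge hfL heR (crosses_symm h)
    · exact not_crosses_of_isDissection_pullback hdiag (hQR ▸ hQ.1) he hf
        (fun v hv => val_ge_of_apexVertex_le (heR v hv))
        (fun v hv => val_ge_of_apexVertex_le (hfR v hv))
  refine ⟨hdiss, fun g hg hcompat => ?_⟩
  rcases isApex_glue.le_or_ge hg hcompat with hgL | hgR
  · refine mem_of_isMaxDissection_pullback (hPL ▸ hP) ?_ hg
      (fun v hv => val_le_of_le_apexVertex (hgL v hv)) hcompat
    rw [map_leftEmb_zero_last]
    exact isSide_or_mem_glue (Or.inl rfl)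
  · refine mem_of_isMaxDissection_pullback (hQR ▸ hQ) ?_ hg
      (fun v hv => val_ge_of_apexVertex_le (hgR v hv)) hcompat
    rw [map_rightEmb_zero_last]
    exact isSide_or_mem_glue (Or.inr rfl)

variable {S : Finset (Finset (Fin (a + b + 3)))}

theorem glue_pullback (hS : IsDissection _ S) (hk : IsApex S (apexVertex a b)) :
    glue (pullback (leftEmb a b) S) (pullback (rightEmb a b) S) = S := by
  ext e
  rw [mem_glue]
  constructor
  · rintro (⟨e', he', rfl⟩ | ⟨e', he', rfl⟩ | ⟨rfl | rfl, hd⟩)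
    · exact (mem_pullback.1 he').2
    · exact (mem_pullback.1 he').2
    · exact hk.2.2.1.resolve_left hd.2
    · exact hk.2.2.2.resolve_left hd.2
  · intro he
    rcases hk.le_or_ge (hS.1 e he) (hS.2 e he) with heL | heR
    · obtain ⟨e', rfl, he' | rfl⟩ := exists_eq_map_mem_pullback (t := 0) (m := a + 1)
        (h := by omega) hS.1 he fun v hv => val_le_of_le_apexVertex (heL v hv)
      · exact Or.inl ⟨e', he', rfl⟩
      · exact Or.inr (Or.inr ⟨Or.inl map_leftEmb_zero_last, hS.1 _ he⟩)
    · obtain ⟨e', rfl, he' | rfl⟩ := exists_eq_map_mem_pullback (t := a + 1) (m := b + 1)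
        (h := by omega) hS.1 he fun v hv => val_ge_of_apexVertex_le (heR v hv)
      · exact Or.inr (Or.inl ⟨e', he', rfl⟩)
      · exact Or.inr (Or.inr ⟨Or.inr map_rightEmb_zero_last, hS.1 _ he⟩)

lemma IsApex.isMaxDissection_pullback_leftEmb (hk : IsApex S (apexVertex a b))
    (hS : IsMaxDissection _ S) : IsMaxDissection (a + 2) (pullback (leftEmb a b) S) :=
  hS.pullback_intervalEmb (by rw [map_leftEmb_zero_last]; exact hk.2.2.1)

lemma IsApex.isMaxDissection_pullback_rightEmb (hk : IsApex S (apexVertex a b))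
    (hS : IsMaxDissection _ S) : IsMaxDissection (b + 2) (pullback (rightEmb a b) S) :=
  hS.pullback_intervalEmb (by rw [map_rightEmb_zero_last]; exact hk.2.2.2)

end Glue

section Counting

open Classical in
noncomputable def triangulations (N : ℕ) : Finset (Finset (Finset (Fin N))) :=
  univ.filter (IsMaxDissection N)

lemma mem_triangulations {S : Finset (Finset (Fin N))} :
    S ∈ triangulations N ↔ IsMaxDissection N S := by
  simp [triangulations]

lemma coe_triangulations : (triangulations N : Set (Finset (Finset (Fin N)))) =
    {S | IsDissection N S ∧ ∀ c, IsCell N S c → c.card = 3} := by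
  ext S
  simp [mem_triangulations, isMaxDissection_iff_forall_isCell]

lemma not_isDiag_two (e : Finset (Fin 2)) : ¬ IsDiag 2 e := fun ⟨hcard, hside⟩ => by
  obtain ⟨p, q, hpq, rfl⟩ := exists_pair_lt hcard
  exact hside ((isSide_pair_iff_of_lt hpq).2 (Or.inl (by omega)))

lemma triangulations_two : triangulations 2 = {∅} := by
  ext S
  rw [mem_triangulations, mem_singleton]
  refine ⟨fun hS => eq_empty_of_forall_notMem fun e he => not_isDiag_two e (hS.1.1 e he), ?_⟩
  rintro rfl
  exact ⟨⟨by simp, by simp⟩, fun e he _ => absurd he (not_isDiag_two e)⟩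

open Classical in
theorem card_filter_isApex (a b : ℕ) :
    ((triangulations (a + b + 3)).filter fun S => ∃ k, IsApex S k ∧ k.val = a + 1).card =
      (triangulations (a + 2)).card * (triangulations (b + 2)).card := by
  have hapex : ∀ {S : Finset (Finset (Fin (a + b + 3)))},
      (∃ k, IsApex S k ∧ k.val = a + 1) ↔ IsApex S (apexVertex a b) :=
    ⟨fun ⟨k, hk, hka⟩ => (Fin.ext hka : k = apexVertex a b) ▸ hk, fun hk => ⟨_, hk, rfl⟩⟩
  rw [← card_product]
  refine card_bij' (fun S _ => (pullback (leftEmb a b) S, pullback (rightEmb a b) S))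
    (fun PQ _ => glue PQ.1 PQ.2) (fun S hS => ?_) (fun PQ hPQ => ?_) (fun S hS => ?_)
    (fun PQ hPQ => ?_)
  · simp only [mem_filter, mem_product, mem_triangulations, hapex] at hS ⊢
    exact ⟨hS.2.isMaxDissection_pullback_leftEmb hS.1, hS.2.isMaxDissection_pullback_rightEmb hS.1⟩
  · simp only [mem_filter, mem_product, mem_triangulations, hapex] at hPQ ⊢
    exact ⟨isMaxDissection_glue hPQ.1 hPQ.2, isApex_glue⟩
  · simp only [mem_filter, mem_triangulations, hapex] at hS
    exact glue_pullback hS.1.1 hS.2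
  · simp only [mem_product, mem_triangulations] at hPQ
    exact Prod.ext (pullback_leftEmb_glue hPQ.1.1.1) (pullback_rightEmb_glue hPQ.2.1.1)

open Classical in
theorem card_triangulations_add_three (n : ℕ) :
    (triangulations (n + 3)).card =
      ∑ ij ∈ antidiagonal n,
        (triangulations (ij.1 + 2)).card * (triangulations (ij.2 + 2)).card := by
  have hsplit : triangulations (n + 3) = (antidiagonal n).biUnion fun ij =>
      (triangulations (n + 3)).filter fun S => ∃ k, IsApex S k ∧ k.val = ij.1 + 1 := by
    ext S
    simp only [mem_biUnion, HasAntidiagonal.mem_antidiagonal, mem_filter]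
    refine ⟨fun hS => ?_, fun ⟨_, _, hS, _⟩ => hS⟩
    obtain ⟨k, hk⟩ := (mem_triangulations.1 hS).exists_isApex (by omega)
    have h0 := hk.1
    have hn := hk.2.1
    simp only [Fin.lt_def, Fin.val_zero, Fin.val_last] at h0 hn
    exact ⟨(k.val - 1, n + 1 - k.val), by omega, hS, k, hk, by omega⟩
  rw [hsplit, card_biUnion]
  · refine sum_congr rfl fun ij hij => ?_
    obtain ⟨i, j⟩ := ij
    obtain rfl : i + j = n := HasAntidiagonal.mem_antidiagonal.1 hij
    exact card_filter_isApex i j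
  · intro ij hij ij' hij' hne
    refine disjoint_left.2 fun S hS hS' => hne ?_
    simp only [mem_filter] at hS hS'
    obtain ⟨k, hk, hki⟩ := hS.2
    obtain ⟨k', hk', hki'⟩ := hS'.2
    obtain rfl := hk.eq (mem_triangulations.1 hS.1).1 hk'
    have := HasAntidiagonal.mem_antidiagonal.1 hij
    have := HasAntidiagonal.mem_antidiagonal.1 hij'
    exact Prod.ext (by omega) (by omega)

theorem card_triangulations (n : ℕ) : (triangulations (n + 2)).card = catalan n := by
  induction n using Nat.strong_induction_on with
  | _ n ih =>
    rcases n with _ | n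
    · rw [triangulations_two, card_singleton, catalan_zero]
    · rw [card_triangulations_add_three, catalan_succ']
      refine sum_congr rfl fun ij hij => ?_
      have := HasAntidiagonal.mem_antidiagonal.1 hij
      rw [ih ij.1 (by omega), ih ij.2 (by omega)]

end Counting

/-- The number of triangulations of a convex `(n+2)`-gon by non-crossing diagonals
is the Catalan number `C n = (1/(n+1)) * choose (2n) n`. -/
theorem count_triangulations (n : ℕ) :
    {S : Finset (Finset (Fin (n + 2))) | IsDissection (n + 2) S ∧
        ∀ c : Finset (Fin (n + 2)), IsCell (n + 2) S c → c.card = 3}.ncard = catalan n ∧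
    (n + 1) * {S : Finset (Finset (Fin (n + 2))) | IsDissection (n + 2) S ∧
        ∀ c : Finset (Fin (n + 2)), IsCell (n + 2) S c → c.card = 3}.ncard
      = (2 * n).choose n := by
  rw [← coe_triangulations, Set.ncard_coe_finset, card_triangulations,
    succ_mul_catalan_eq_centralBinom]
  exact ⟨rfl, rfl⟩

end PolygonDissection
end

section
/- Lagrange inversion: let φ(y) be a formal power series with nonzero constant term, and let y(z) be the formal power series with y(0) = 0 satisfying y(z) = z·φ(y(z)). Then for every n ≥ 1, n·[z^n] y(z) = [y^{n-1}] φ(y)^n. -/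
/-!
Suppose first that `φ(0)` is a unit and write `y = X u` with `u = φ(y)` invertible. Then
`y' = u^(n+1) · (u⁻¹^(n+1) y')` with `u^(n+1) = φ^(n+1)(y) ≡ ∑_{k ≤ n} [w^k] φ^(n+1) · y^k`
modulo `X^(n+1)`, so `[X^n] y'` is a combination of the residues of `y^(k-n-1) y'`. For `k ≠ n`
that form is `1/(k-n)` times the derivative of `y^(k-n)`, so its residue vanishes; for `k = n`
the residue is `1`.

In general, specialise the generic series `∑ aᵢ wⁱ` over `ℚ[a₀, a₁, …]`, whose constant
coefficient becomes a unit in the fraction field. Since `y = X φ(y)` has exactly one solution, the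
specialisation carries the generic solution to `y`.
-/

open PowerSeries

/-- Composition `f(y)` of formal power series, meaningful when the constant
coefficient of `y` vanishes (then `coeff n (y^k) = 0` for `k > n`). -/
noncomputable def psComp {R : Type*} [CommRing R] (f y : PowerSeries R) :
    PowerSeries R :=
  PowerSeries.mk fun n =>
    ∑ k ∈ Finset.range (n + 1), PowerSeries.coeff k f * PowerSeries.coeff n (y ^ k)

namespace PowerSeries

variable {R : Type*} [CommRing R]

@[simp]
theorem coeff_psComp (f y : R⟦X⟧) (n : ℕ) :
    coeff n (psComp f y) = ∑ k ∈ Finset.range (n + 1), coeff k f * coeff n (y ^ k) :=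
  coeff_mk _ _

@[simp]
theorem constantCoeff_psComp (f y : R⟦X⟧) : constantCoeff (psComp f y) = constantCoeff f := by
  rw [← coeff_zero_eq_constantCoeff_apply, ← coeff_zero_eq_constantCoeff_apply, coeff_psComp]
  simp

theorem coeff_pow_eq_zero_of_lt {y : R⟦X⟧} (hy : constantCoeff y = 0) {n k : ℕ} (h : n < k) :
    coeff n (y ^ k) = 0 :=
  X_pow_dvd_iff.mp (pow_dvd_pow_of_dvd (X_dvd_iff.mpr hy) k) n h

theorem psComp_eq_subst {y : R⟦X⟧} (hy : constantCoeff y = 0) (f : R⟦X⟧) :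
    psComp f y = f.subst y := by
  ext n
  rw [coeff_psComp, coeff_subst' (HasSubst.of_constantCoeff_zero' hy),
    finsum_eq_sum_of_support_subset (s := Finset.range (n + 1))]
  · simp only [smul_eq_mul]
  · intro k hk
    by_contra hkn
    simp only [Finset.coe_range, Set.mem_Iio, not_lt] at hkn
    simp [coeff_pow_eq_zero_of_lt hy (Nat.lt_of_succ_le hkn)] at hk

theorem psComp_pow {y : R⟦X⟧} (hy : constantCoeff y = 0) (f : R⟦X⟧) (k : ℕ) :
    psComp (f ^ k) y = psComp f y ^ k := by
  rw [psComp_eq_subst hy, psComp_eq_subst hy, subst_pow (HasSubst.of_constantCoeff_zero' hy)]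

theorem map_psComp {S : Type*} [CommRing S] (e : R →+* S) (f y : R⟦X⟧) :
    map e (psComp f y) = psComp (map e f) (map e y) := by
  ext n
  simp [map_sum, ← map_pow]

theorem X_pow_dvd_psComp_sub_psComp (f : R⟦X⟧) {y y' : R⟦X⟧} {n : ℕ} (h : X ^ n ∣ y - y') :
    X ^ n ∣ psComp f y - psComp f y' := by
  refine X_pow_dvd_iff.mpr fun j hj => ?_
  rw [map_sub, coeff_psComp, coeff_psComp, ← Finset.sum_sub_distrib]
  refine Finset.sum_eq_zero fun k _ => ?_
  rw [← mul_sub, ← map_sub, X_pow_dvd_iff.mp (h.trans (sub_dvd_pow_sub_pow y y' k)) j hj,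
    mul_zero]

theorem X_pow_dvd_psComp_sub_sum {y : R⟦X⟧} (hy : constantCoeff y = 0) (f : R⟦X⟧) (n : ℕ) :
    X ^ n ∣ psComp f y - ∑ k ∈ Finset.range n, C (coeff k f) * y ^ k := by
  refine X_pow_dvd_iff.mpr fun j hj => ?_
  simp only [map_sub, coeff_psComp, map_sum, coeff_C_mul]
  rw [sub_eq_zero]
  refine Finset.sum_subset (Finset.range_subset_range.mpr hj) fun k hk hkj => ?_
  simp only [Finset.mem_range, not_lt] at hk hkj
  rw [coeff_pow_eq_zero_of_lt hy hkj, mul_zero]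

theorem coeff_psComp_mul {y : R⟦X⟧} (hy : constantCoeff y = 0) (f g : R⟦X⟧) (n : ℕ) :
    coeff n (psComp f y * g) =
      ∑ k ∈ Finset.range (n + 1), coeff k f * coeff n (y ^ k * g) := by
  obtain ⟨h, hh⟩ := X_pow_dvd_psComp_sub_sum hy f (n + 1)
  rw [sub_eq_iff_eq_add'.mp hh, add_mul, map_add, mul_assoc, coeff_X_pow_mul',
    if_neg (by omega), add_zero, Finset.sum_mul, map_sum]
  simp only [mul_assoc, coeff_C_mul]

theorem eq_of_forall_X_pow_dvd_sub {f g : R⟦X⟧} (h : ∀ n, X ^ n ∣ f - g) : f = g := by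
  ext n
  rw [← sub_eq_zero, ← map_sub]
  exact X_pow_dvd_iff.mp (h (n + 1)) n n.lt_succ_self

theorem eq_of_eq_X_mul_psComp {φ y y' : R⟦X⟧} (hy : y = X * psComp φ y)
    (hy' : y' = X * psComp φ y') : y = y' := by
  refine eq_of_forall_X_pow_dvd_sub fun n => ?_
  induction n with
  | zero => simp
  | succ n ih =>
    rw [hy, hy', ← mul_sub, pow_succ']
    exact mul_dvd_mul_left X (X_pow_dvd_psComp_sub_psComp φ ih)

noncomputable def psCompFixedPointCoeff (φ : R⟦X⟧) : ℕ → R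
  | 0 => 0
  | n + 1 =>
    coeff n (psComp φ (mk fun j => if j ≤ n then psCompFixedPointCoeff φ j else 0))
decreasing_by omega

noncomputable def psCompFixedPoint (φ : R⟦X⟧) : R⟦X⟧ :=
  mk (psCompFixedPointCoeff φ)

theorem psCompFixedPoint_eq (φ : R⟦X⟧) :
    psCompFixedPoint φ = X * psComp φ (psCompFixedPoint φ) := by
  ext n
  cases n with
  | zero => simp [psCompFixedPoint, psCompFixedPointCoeff]
  | succ n =>
    have htrunc : X ^ (n + 1) ∣
        (mk fun j => if j ≤ n then psCompFixedPointCoeff φ j else 0) - psCompFixedPoint φ := by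
      refine X_pow_dvd_iff.mpr fun j hj => ?_
      simp [psCompFixedPoint, Nat.le_of_lt_succ hj]
    rw [coeff_succ_X_mul, psCompFixedPoint, coeff_mk, psCompFixedPointCoeff, ← sub_eq_zero,
      ← map_sub]
    exact X_pow_dvd_iff.mp (X_pow_dvd_psComp_sub_psComp φ htrunc) n n.lt_succ_self

theorem eq_psCompFixedPoint {φ y : R⟦X⟧} (hy : y = X * psComp φ y) : y = psCompFixedPoint φ :=
  eq_of_eq_X_mul_psComp hy (psCompFixedPoint_eq φ)

theorem map_psCompFixedPoint {S : Type*} [CommRing S] (e : R →+* S) (φ : R⟦X⟧) :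
    map e (psCompFixedPoint φ) = psCompFixedPoint (map e φ) := by
  refine eq_psCompFixedPoint ?_
  conv_lhs => rw [psCompFixedPoint_eq φ]
  rw [map_mul, map_X, map_psComp]

theorem coeff_X_mul_derivative (f : R⟦X⟧) (n : ℕ) :
    coeff n (X * d⁄dX R f) = n * coeff n f := by
  cases n with
  | zero => simp
  | succ n => rw [coeff_succ_X_mul, coeff_derivative, mul_comm, Nat.cast_succ]

section RatAlgebra

variable [Algebra ℚ R]

theorem coeff_inv_pow_succ_mul_derivative_X_mul (u : R⟦X⟧ˣ) (j : ℕ) :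
    coeff j ((↑u⁻¹ : R⟦X⟧) ^ (j + 1) * d⁄dX R (X * (u : R⟦X⟧))) = if j = 0 then 1 else 0 := by
  set v : R⟦X⟧ := ↑u⁻¹
  have hvu : v * u = 1 := u.inv_mul
  have hd : d⁄dX R (X * (u : R⟦X⟧)) = (u : R⟦X⟧) + X * d⁄dX R (u : R⟦X⟧) := by
    rw [Derivation.leibniz, derivative_X, smul_eq_mul, smul_eq_mul]
    ring
  split_ifs with hj
  · subst hj
    rw [zero_add, pow_one, coeff_zero_eq_constantCoeff_apply, map_mul, hd, map_add,
      ← coeff_zero_eq_constantCoeff_apply (X * _), coeff_zero_X_mul, add_zero, ← map_mul, hvu,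
      map_one]
  · have key : (j : R⟦X⟧) * (v ^ (j + 1) * d⁄dX R (X * (u : R⟦X⟧))) =
        (j : R⟦X⟧) * v ^ j - X * d⁄dX R (v ^ j) := by
      have hdv : d⁄dX R v = -v ^ 2 * d⁄dX R (u : R⟦X⟧) := derivative_inv u
      obtain ⟨i, rfl⟩ := Nat.exists_eq_add_one_of_ne_zero hj
      rw [derivative_pow, hdv, hd, Nat.add_sub_cancel]
      linear_combination (↑(i + 1) * v ^ (i + 1)) * hvu
    have hj' : IsUnit (j : R) := by
      simpa using (Ne.isUnit (Nat.cast_ne_zero.mpr hj : (j : ℚ) ≠ 0)).map (algebraMap ℚ R)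
    refine hj'.mul_right_eq_zero.mp ?_
    rw [← coeff_C_mul, map_natCast C, key, map_sub, coeff_X_mul_derivative, ← map_natCast C,
      coeff_C_mul, sub_self]

theorem coeff_X_mul_pow_mul_inv_pow_mul_derivative (u : R⟦X⟧ˣ) {k n : ℕ} (hk : k ≤ n) :
    coeff n ((X * (u : R⟦X⟧)) ^ k * ((↑u⁻¹ : R⟦X⟧) ^ (n + 1) * d⁄dX R (X * (u : R⟦X⟧)))) =
      if k = n then 1 else 0 := by
  have hpow : (X * (u : R⟦X⟧)) ^ k * (↑u⁻¹ : R⟦X⟧) ^ (n + 1) =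
      X ^ k * (↑u⁻¹ : R⟦X⟧) ^ (n - k + 1) := by
    rw [show n + 1 = k + (n - k + 1) by omega, pow_add, ← mul_assoc, mul_pow, mul_assoc (X ^ k),
      ← mul_pow, Units.mul_inv, one_pow, mul_one]
  rw [← mul_assoc, hpow, mul_assoc, coeff_X_pow_mul', if_pos hk,
    coeff_inv_pow_succ_mul_derivative_X_mul]
  simp only [show n - k = 0 ↔ k = n by omega]

theorem lagrange_inversion_of_isUnit {φ y : R⟦X⟧} (hφ : IsUnit (constantCoeff φ))
    (hy : y = X * psComp φ y) (n : ℕ) :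
    ((n + 1 : ℕ) : R) * coeff (n + 1) y = coeff n (φ ^ (n + 1)) := by
  have hy0 : constantCoeff y = 0 := by rw [hy]; simp
  obtain ⟨u, hu⟩ : IsUnit (psComp φ y) := by
    rwa [isUnit_iff_constantCoeff, constantCoeff_psComp]
  rw [← hu] at hy
  calc ((n + 1 : ℕ) : R) * coeff (n + 1) y = coeff n (d⁄dX R y) := by
        rw [coeff_derivative, mul_comm, Nat.cast_succ]
    _ = coeff n (psComp (φ ^ (n + 1)) y * ((↑u⁻¹ : R⟦X⟧) ^ (n + 1) * d⁄dX R y)) := by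
        rw [psComp_pow hy0, ← hu, ← mul_assoc, ← mul_pow, Units.mul_inv, one_pow, one_mul]
    _ = ∑ k ∈ Finset.range (n + 1), coeff k (φ ^ (n + 1)) * if k = n then 1 else 0 := by
        rw [coeff_psComp_mul hy0]
        refine Finset.sum_congr rfl fun k hk => ?_
        rw [hy, coeff_X_mul_pow_mul_inv_pow_mul_derivative u (Finset.mem_range_succ_iff.mp hk)]
    _ = coeff n (φ ^ (n + 1)) := by simp

end RatAlgebra

noncomputable def genericSeries : (MvPolynomial ℕ ℚ)⟦X⟧ := mk MvPolynomial.X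

theorem map_eval₂Hom_genericSeries {R : Type*} [CommRing R] [Algebra ℚ R] (φ : R⟦X⟧) :
    map (MvPolynomial.eval₂Hom (algebraMap ℚ R) (coeff · φ)) genericSeries = φ := by
  ext i
  simp [genericSeries]

theorem lagrange_inversion_genericSeries (n : ℕ) :
    ((n + 1 : ℕ) : MvPolynomial ℕ ℚ) * coeff (n + 1) (psCompFixedPoint genericSeries) =
      coeff n (genericSeries ^ (n + 1)) := by
  let ι := algebraMap (MvPolynomial ℕ ℚ) (FractionRing (MvPolynomial ℕ ℚ))
  have hι : Function.Injective ι := IsFractionRing.injective _ _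
  have hunit : IsUnit (constantCoeff (map ι genericSeries)) := by
    rw [← coeff_zero_eq_constantCoeff_apply, coeff_map, genericSeries, coeff_mk]
    exact ((map_ne_zero_iff ι hι).mpr (MvPolynomial.X_ne_zero 0)).isUnit
  apply hι
  rw [map_mul, map_natCast, ← coeff_map, ← coeff_map, map_pow, map_psCompFixedPoint]
  exact lagrange_inversion_of_isUnit hunit (psCompFixedPoint_eq _) n

end PowerSeries

theorem lagrange_inversion_general {R : Type*} [CommRing R] [Algebra ℚ R]
    (φ y : PowerSeries R)
    (hy : y = PowerSeries.X * psComp φ y)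
    (n : ℕ) (hn : 1 ≤ n) :
    (n : R) * PowerSeries.coeff n y = PowerSeries.coeff (n - 1) (φ ^ n) := by
  obtain ⟨m, rfl⟩ := Nat.exists_eq_add_of_le' hn
  let e := MvPolynomial.eval₂Hom (algebraMap ℚ R) (coeff · φ)
  rw [eq_psCompFixedPoint hy, ← map_eval₂Hom_genericSeries φ, ← map_psCompFixedPoint, coeff_map,
    ← map_pow, coeff_map, Nat.add_sub_cancel, ← map_natCast e, ← map_mul,
    lagrange_inversion_genericSeries]

/-- Lagrange inversion: if `φ` has nonzero constant term and `y(z)`, with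
`y(0) = 0`, satisfies `y = z * φ(y)`, then `n * [z^n] y = [y^(n-1)] φ^n`
for all `n ≥ 1`. -/
theorem lagrange_inversion {R : Type*} [CommRing R] [Algebra ℚ R]
    (φ y : PowerSeries R)
    (hφ : PowerSeries.constantCoeff φ ≠ 0)
    (hy0 : PowerSeries.constantCoeff y = 0)
    (hy : y = PowerSeries.X * psComp φ y)
    (n : ℕ) (hn : 1 ≤ n) :
    (n : R) * PowerSeries.coeff n y = PowerSeries.coeff (n - 1) (φ ^ n) :=
  lagrange_inversion_general φ y hy n hn
end

section
/- Every matrix A in SL(2,ℤ) can be written as a product of matrices of the form M(c) = [[c, -1],[1, 0]] with positive integer entries c: there exist N ≥ 1 and positive integers c_1, ..., c_N such that A = M(c_1)·M(c_2)·...·M(c_N). -/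
/-- The elementary matrix `M(c) = [[c, -1], [1, 0]]`. -/
def Mmat (c : ℤ) : Matrix (Fin 2) (Fin 2) ℤ := !![c, -1; 1, 0]

/-!
In `SL(2, ℤ)` we have `M(c) = T ^ c * S`. The relations `M(a) M(b) = M(a + 1) M(1) M(b + 1)`
and `M(1) ^ 6 = 1` let us rewrite `M(c - 1)` as `M(c) M(1) M(2) M(1) ^ 5`, so by downward
induction every `M(c)`, `c ∈ ℤ`, is a product of `M(c')` with `c' > 0`. Hence so are
`S = M(0)`, `S⁻¹ = M(1) ^ 3 M(0)` and `T ^ (±1) = M(±1) S⁻¹`, and since `S` and `T` generate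
`SL(2, ℤ)`, so is every element. Appending `M(1) ^ 6` makes the word nonempty.
-/

open Matrix MatrixGroups ModularGroup

namespace Mmat

def toSL (c : ℤ) : SL(2, ℤ) := T ^ c * S

@[simp]
lemma coe_toSL (c : ℤ) : (toSL c : Matrix (Fin 2) (Fin 2) ℤ) = Mmat c := by
  simp [toSL, coe_T_zpow, coe_S, Mmat]

lemma coe_prod_map_toSL (l : List ℤ) :
    ((l.map toSL).prod : Matrix (Fin 2) (Fin 2) ℤ) = (l.map Mmat).prod := by
  rw [← SpecialLinearGroup.coeMonoidHom_apply, map_list_prod, List.map_map]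
  congr 2
  ext1 c
  exact coe_toSL c

lemma toSL_mul_toSL (a b : ℤ) : toSL a * toSL b = toSL (a + 1) * toSL 1 * toSL (b + 1) := by
  apply SpecialLinearGroup.coeMonoidHom_injective
  simp only [map_mul, SpecialLinearGroup.coeMonoidHom_apply, coe_toSL, Mmat, mul_fin_two]
  ring_nf

lemma toSL_one_pow_six : toSL 1 ^ 6 = 1 := by
  apply SpecialLinearGroup.coeMonoidHom_injective
  simp [pow_succ, Mmat, one_fin_two]

lemma inv_S_eq : S⁻¹ = toSL 1 ^ 3 * toSL 0 := by
  apply SpecialLinearGroup.coeMonoidHom_injective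
  simp [pow_succ, Mmat, coe_S, adjugate_fin_two]

def positiveProducts : Submonoid SL(2, ℤ) where
  carrier := {A | ∃ l : List ℤ, (∀ c ∈ l, 0 < c) ∧ (l.map toSL).prod = A}
  one_mem' := ⟨[], by simp⟩
  mul_mem' := by
    rintro _ _ ⟨l, hl, rfl⟩ ⟨m, hm, rfl⟩
    exact ⟨l ++ m, by grind, by simp⟩

lemma toSL_mem_positiveProducts_of_pos {c : ℤ} (hc : 0 < c) : toSL c ∈ positiveProducts :=
  ⟨[c], by simpa using hc, by simp⟩

lemma toSL_mem_positiveProducts (c : ℤ) : toSL c ∈ positiveProducts := by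
  have h1 := toSL_mem_positiveProducts_of_pos one_pos
  induction c using Int.inductionOn' (b := 1) with
  | zero => exact h1
  | succ k hk _ => exact toSL_mem_positiveProducts_of_pos (by omega)
  | pred k _ ih =>
    have h : toSL (k - 1) = toSL k * toSL 1 * toSL 2 * toSL 1 ^ 5 := by
      rw [← mul_one (toSL (k - 1)), ← toSL_one_pow_six, pow_succ', ← mul_assoc, toSL_mul_toSL,
        sub_add_cancel, one_add_one_eq_two]
    rw [h]
    exact mul_mem (mul_mem (mul_mem ih h1) (toSL_mem_positiveProducts_of_pos two_pos))
      (pow_mem h1 5)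

lemma positiveProducts_eq_top : positiveProducts = ⊤ := by
  have hS : S ∈ positiveProducts := by simpa [toSL] using toSL_mem_positiveProducts 0
  have hS_inv : S⁻¹ ∈ positiveProducts := by
    rw [inv_S_eq]
    exact mul_mem (pow_mem (toSL_mem_positiveProducts 1) 3) (toSL_mem_positiveProducts 0)
  have hT_zpow (c : ℤ) : T ^ c ∈ positiveProducts := by
    simpa [toSL] using mul_mem (toSL_mem_positiveProducts c) hS_inv
  rw [eq_top_iff, ← Subgroup.top_toSubmonoid, ← SpecialLinearGroup.SL2Z_generators,
    Subgroup.closure_toSubmonoid, Submonoid.closure_le]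
  simp only [Set.inv_insert, Set.inv_singleton, Set.union_subset_iff, Set.insert_subset_iff,
    Set.singleton_subset_iff, SetLike.mem_coe]
  exact ⟨⟨hS, by simpa using hT_zpow 1⟩, hS_inv, by simpa using hT_zpow (-1)⟩

theorem exists_pos_list_prod_eq (A : SL(2, ℤ)) :
    ∃ l : List ℤ, l ≠ [] ∧ (∀ c ∈ l, 0 < c) ∧ A = (l.map toSL).prod := by
  obtain ⟨l, hl, rfl⟩ : A ∈ positiveProducts := positiveProducts_eq_top ▸ Submonoid.mem_top A
  refine ⟨l ++ List.replicate 6 1, by simp, by grind, ?_⟩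
  rw [List.map_append, List.prod_append, List.map_replicate, List.prod_replicate,
    toSL_one_pow_six, mul_one]

end Mmat

/-- Every `A ∈ SL(2, ℤ)` is a product `M(c₁) * M(c₂) * ... * M(c_N)` of
elementary matrices `M(c) = [[c, -1], [1, 0]]` with positive integers `cᵢ`. -/
theorem sl2_prod_elementary (A : Matrix.SpecialLinearGroup (Fin 2) ℤ) :
    ∃ (N : ℕ) (c : Fin N → ℤ), 1 ≤ N ∧ (∀ i, 0 < c i) ∧
      (A : Matrix (Fin 2) (Fin 2) ℤ) = (List.ofFn fun i => Mmat (c i)).prod := by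
  obtain ⟨l, hl, hpos, rfl⟩ := Mmat.exists_pos_list_prod_eq A
  refine ⟨l.length, fun i => l[(i : ℕ)], List.length_pos_iff.mpr hl,
    fun i => hpos _ (List.getElem_mem _), ?_⟩
  rw [Mmat.coe_prod_map_toSL, ← List.ofFn_getElem_eq_map]
end
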